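/- arXiv:nlin/0701061 — 3 statements merged into one kernel-verified Lean document; each statement's English description precedes it below -/
import Mathlib

section
/- Key Lemma (commutative case, r = 0): Let (V,Ω) be a 2n-dimensional complex symplectic vector space and U ⊂ V a nonempty open set. Suppose F₁,…,F_n are holomorphic functions on U that are functionally independent (their differentials are linearly independent at each point of a dense subset) and pairwise Poisson-commute: {F_i,F_j} = 0 for all i,j. Let 𝔤 ⊂ sp(V,Ω) be a Lie subalgebra such that {F_j, H_A} = 0 on U for every A ∈ 𝔤 and every j. Then 𝔤 is Abelian. -/
open Module

/-- Key Lemma (commutative case): if `F₁,…,F_n` are holomorphic on an open set `U`,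
functionally independent on a dense subset of `U`, and pairwise Poisson-commute, and a
Lie subalgebra `𝔤 ⊂ sp(V,Ω)` preserves every `F_j` (i.e. `{F_j, H_A} = dF_j(Ax) = 0`
on `U` for all `A ∈ 𝔤`), then `𝔤` is Abelian. -/
theorem key_lemma_commutative
    {V : Type*} [NormedAddCommGroup V] [NormedSpace ℂ V] [FiniteDimensional ℂ V]
    (n : ℕ) (hdim : finrank ℂ V = 2 * n)
    (Ω : V →ₗ[ℂ] V →ₗ[ℂ] ℂ)
    (halt : ∀ x : V, Ω x x = 0)
    (hnd : ∀ x : V, (∀ y : V, Ω x y = 0) → x = 0)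
    (U : Set V) (hUopen : IsOpen U) (hUne : U.Nonempty)
    (F : Fin n → V → ℂ) (hFd : ∀ i, DifferentiableOn ℂ (F i) U)
    -- Hamiltonian vector fields of the `F_i` on `U`
    (Xf : Fin n → V → V)
    (hXf : ∀ i, ∀ x ∈ U, ∀ v : V, Ω (Xf i x) v = fderiv ℂ (F i) x v)
    -- functional independence on a dense subset `D` of `U`
    (D : Set V) (hDU : D ⊆ U) (hDense : ∀ x ∈ U, x ∈ closure D)
    (hind : ∀ x ∈ D, LinearIndependent ℂ fun i : Fin n => (fderiv ℂ (F i) x : V →ₗ[ℂ] ℂ))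
    -- pairwise Poisson commutation `{F_i, F_j} = Ω(X_{F_i}, X_{F_j}) = 0` on `U`
    (hcomm : ∀ i j : Fin n, ∀ x ∈ U, Ω (Xf i x) (Xf j x) = 0)
    -- Lie subalgebra `𝔤 ⊂ sp(V,Ω)`
    (𝔤 : Submodule ℂ (V →ₗ[ℂ] V))
    (hsp : ∀ A ∈ 𝔤, ∀ x y : V, Ω x (A y) = - Ω (A x) y)
    (hlie : ∀ A ∈ 𝔤, ∀ B ∈ 𝔤, A ∘ₗ B - B ∘ₗ A ∈ 𝔤)
    -- `𝔤` preserves each `F_j`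
    (hpres : ∀ A ∈ 𝔤, ∀ j : Fin n, ∀ x ∈ U, fderiv ℂ (F j) x (A x) = 0) :
    ∀ A ∈ 𝔤, ∀ B ∈ 𝔤, A ∘ₗ B = B ∘ₗ A := by
  -- Ω is skew-symmetric
  have hskew : ∀ x y : V, Ω x y = - Ω y x := by
    intro x y
    have h := halt (x + y)
    simp only [map_add, LinearMap.add_apply, halt] at h
    linear_combination h
  -- Step 1: on the dense set `D`, `Ω (A x) (B x) = 0` for all `A, B ∈ 𝔤`.
  have keyD : ∀ A ∈ 𝔤, ∀ B ∈ 𝔤, ∀ x ∈ D, Ω (A x) (B x) = 0 := by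
    intro A hA B hB x hx
    have hxU : x ∈ U := hDU hx
    set φ : Fin n → Module.Dual ℂ V := fun i => fderiv ℂ (F i) x with hφdef
    have hφ : LinearIndependent ℂ φ := hind x hx
    set P : Submodule ℂ (Module.Dual ℂ V) := Submodule.span ℂ (Set.range φ) with hPdef
    set W : Submodule ℂ V := P.dualCoannihilator with hWdef
    -- membership criterion for W
    have hmemW : ∀ v : V, (∀ j, φ j v = 0) → v ∈ W := by
      intro v hv
      rw [hWdef, Submodule.mem_dualCoannihilator]
      intro f hf
      induction hf using Submodule.span_induction with
      | mem f hf => obtain ⟨j, rfl⟩ := hf; exact hv j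
      | zero => simp
      | add f g _ _ hf hg => simp [hf, hg]
      | smul c f _ hf => simp [hf]
    -- rank of W is n
    have hWrank : finrank ℂ W = n := by
      have h1 := Subspace.finrank_add_finrank_dualCoannihilator_eq P
      have h2 : finrank ℂ P = n := by
        rw [hPdef, finrank_span_eq_card hφ, Fintype.card_fin]
      rw [hdim, h2] at h1
      rw [hWdef]
      omega
    set e : Fin n → V := fun i => Xf i x with hedef
    have heφ : ∀ i, (Ω (e i) : V →ₗ[ℂ] ℂ) = φ i := by
      intro i; ext v; exact hXf i x hxU v
    -- the e i are linearly independent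
    have he_ind : LinearIndependent ℂ e := by
      apply LinearIndependent.of_comp Ω
      have : (Ω ∘ e) = φ := funext heφ
      rw [this]; exact hφ
    -- span of e is contained in W
    have he_memW : ∀ i, e i ∈ W := by
      intro i
      apply hmemW
      intro j
      rw [← heφ j]
      exact hcomm j i x hxU
    have hspan_le : Submodule.span ℂ (Set.range e) ≤ W := by
      rw [Submodule.span_le]
      rintro _ ⟨i, rfl⟩
      exact he_memW i
    have hspan_rank : finrank ℂ (Submodule.span ℂ (Set.range e)) = n := by
      rw [finrank_span_eq_card he_ind, Fintype.card_fin]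
    have hspan_eq : Submodule.span ℂ (Set.range e) = W :=
      Submodule.eq_of_le_of_finrank_eq hspan_le (by rw [hspan_rank, hWrank])
    -- A x and B x lie in W = span e
    have hAx : A x ∈ W := hmemW _ fun j => hpres A hA j x hxU
    have hBx : B x ∈ W := hmemW _ fun j => hpres B hB j x hxU
    rw [← hspan_eq] at hAx
    -- Ω (e i) (B x) = 0 for all i
    have he_Bx : ∀ i, Ω (e i) (B x) = 0 := by
      intro i
      have := heφ i
      have h0 : φ i (B x) = 0 := hpres B hB i x hxU
      rw [← h0, ← this]
    -- conclude by span induction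
    have hgen : ∀ v ∈ Submodule.span ℂ (Set.range e), Ω v (B x) = 0 := by
      intro v hv
      induction hv using Submodule.span_induction with
      | mem u hu => obtain ⟨i, rfl⟩ := hu; exact he_Bx i
      | zero => simp
      | add u w _ _ hu hw => simp [hu, hw]
      | smul c u _ hu => simp [hu]
    exact hgen _ hAx
  -- Step 2: extend to `U` by continuity.
  have keyU : ∀ A ∈ 𝔤, ∀ B ∈ 𝔤, ∀ x ∈ U, Ω (A x) (B x) = 0 := by
    intro A hA B hB x hx
    set Ω₁ : V →ₗ[ℂ] (V →L[ℂ] ℂ) :=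
      (LinearMap.toContinuousLinearMap : (V →ₗ[ℂ] ℂ) ≃ₗ[ℂ] (V →L[ℂ] ℂ)).toLinearMap ∘ₗ Ω
        with hΩ₁def
    set Ω₂ : V →L[ℂ] (V →L[ℂ] ℂ) := LinearMap.toContinuousLinearMap Ω₁ with hΩ₂def
    have hΩ₂ : ∀ u v : V, Ω₂ u v = Ω u v := fun u v => rfl
    have hcont : Continuous fun y : V => Ω (A y) (B y) := by
      have h1 := Ω₂.continuous₂
      have hAc := A.continuous_of_finiteDimensional
      have hBc := B.continuous_of_finiteDimensional
      have : Continuous fun y : V => Ω₂ (A y) (B y) :=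
        h1.comp (hAc.prodMk hBc)
      simpa [hΩ₂] using this
    have : Set.EqOn (fun y : V => Ω (A y) (B y)) (fun _ => (0 : ℂ)) (closure D) := by
      apply Set.EqOn.closure _ hcont continuous_const
      intro y hy
      exact keyD A hA B hB y hy
    exact this (hDense x hx)
  -- Step 3: extend to all of `V` by the polynomial (quadratic) nature of the map.
  have keyV : ∀ A ∈ 𝔤, ∀ B ∈ 𝔤, ∀ x : V, Ω (A x) (B x) = 0 := by
    intro A hA B hB v
    obtain ⟨x₀, hx₀⟩ := hUne
    obtain ⟨ε, hε, hball⟩ := Metric.isOpen_iff.1 hUopen x₀ hx₀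
    set w : V := v - x₀ with hwdef
    -- quadratic coefficients
    set a : ℂ := Ω (A x₀) (B x₀) with hadef
    set b : ℂ := Ω (A x₀) (B w) + Ω (A w) (B x₀) with hbdef
    set c : ℂ := Ω (A w) (B w) with hcdef
    have hpoly : ∀ t : ℂ, Ω (A (x₀ + t • w)) (B (x₀ + t • w)) = a + t * b + t ^ 2 * c := by
      intro t
      simp only [map_add, map_smul, LinearMap.add_apply, LinearMap.smul_apply, smul_eq_mul,
        hadef, hbdef, hcdef]
      ring
    have hzero : ∀ t : ℂ, ‖t‖ * ‖w‖ < ε → a + t * b + t ^ 2 * c = 0 := by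
      intro t ht
      rw [← hpoly t]
      apply keyU A hA B hB
      apply hball
      simp only [Metric.mem_ball, dist_eq_norm, add_sub_cancel_left, norm_smul]
      exact ht
    set δ : ℝ := ε / (‖w‖ + 1) with hδdef
    have hδpos : 0 < δ := div_pos hε (by positivity)
    have hsmall : ∀ t : ℂ, ‖t‖ < δ → ‖t‖ * ‖w‖ < ε := by
      intro t ht
      calc ‖t‖ * ‖w‖ ≤ ‖t‖ * (‖w‖ + 1) := by nlinarith [norm_nonneg t]
        _ < δ * (‖w‖ + 1) := by
            apply mul_lt_mul_of_pos_right ht (by positivity)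
        _ = ε := by
            rw [hδdef]; field_simp
    have ha0 : a = 0 := by
      have := hzero 0 (by simpa using hε)
      simpa using this
    set t₁ : ℂ := ((δ / 2 : ℝ) : ℂ) with ht₁def
    set t₂ : ℂ := ((δ / 4 : ℝ) : ℂ) with ht₂def
    have ht₁norm : ‖t₁‖ < δ := by
      rw [ht₁def, Complex.norm_real, Real.norm_eq_abs, abs_of_pos (by positivity)]
      linarith
    have ht₂norm : ‖t₂‖ < δ := by
      rw [ht₂def, Complex.norm_real, Real.norm_eq_abs, abs_of_pos (by positivity)]
      linarith
    have h1 : a + t₁ * b + t₁ ^ 2 * c = 0 := hzero t₁ (hsmall t₁ ht₁norm)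
    have h2 : a + t₂ * b + t₂ ^ 2 * c = 0 := hzero t₂ (hsmall t₂ ht₂norm)
    have ht₁ne : t₁ ≠ 0 := by
      simp only [ht₁def, ne_eq, Complex.ofReal_eq_zero]
      positivity
    have ht₂ne : t₂ ≠ 0 := by
      simp only [ht₂def, ne_eq, Complex.ofReal_eq_zero]
      positivity
    have htne : t₁ ≠ t₂ := by
      simp only [ht₁def, ht₂def, ne_eq, Complex.ofReal_inj]
      intro h
      have : δ = 0 := by linarith
      linarith
    have hc0 : c = 0 := by
      have e1 : b + t₁ * c = 0 := by
        have := h1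
        rw [ha0] at this
        field_simp at this
        have h' : t₁ * (b + t₁ * c) = 0 := by ring_nf; linear_combination this
        rcases mul_eq_zero.1 h' with h | h
        · exact absurd h ht₁ne
        · exact h
      have e2 : b + t₂ * c = 0 := by
        have := h2
        rw [ha0] at this
        have h' : t₂ * (b + t₂ * c) = 0 := by ring_nf; linear_combination this
        rcases mul_eq_zero.1 h' with h | h
        · exact absurd h ht₂ne
        · exact h
      have : (t₁ - t₂) * c = 0 := by linear_combination e1 - e2
      rcases mul_eq_zero.1 this with h | h
      · exact absurd (sub_eq_zero.1 h) htne
      · exact h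
    have hb0 : b = 0 := by
      have e1 : b + t₁ * c = 0 := by
        have h' : t₁ * (b + t₁ * c) = 0 := by
          rw [ha0] at h1; linear_combination h1
        rcases mul_eq_zero.1 h' with h | h
        · exact absurd h ht₁ne
        · exact h
      rw [hc0] at e1
      simpa using e1
    have := hpoly 1
    rw [ha0, hb0, hc0] at this
    simpa [hwdef] using this
  -- Step 4: polarize and use nondegeneracy.
  intro A hA B hB
  have hpolar : ∀ x y : V, Ω (A x) (B y) + Ω (A y) (B x) = 0 := by
    intro x y
    have h1 := keyV A hA B hB (x + y)
    have h2 := keyV A hA B hB x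
    have h3 := keyV A hA B hB y
    simp only [map_add, LinearMap.add_apply] at h1
    linear_combination h1 - h2 - h3
  ext y
  simp only [LinearMap.comp_apply]
  have hkey : ∀ x : V, Ω (A (B y) - B (A y)) x = 0 := by
    intro x
    have e1 : Ω (A (B y)) x = Ω (A x) (B y) := by
      have := hsp A hA x (B y)
      rw [hskew (A (B y)) x]
      linear_combination -this
    have e2 : Ω (B (A y)) x = Ω (B x) (A y) := by
      have := hsp B hB x (A y)
      rw [hskew (B (A y)) x]
      linear_combination -this
    have e3 : Ω (B x) (A y) = - Ω (A y) (B x) := hskew _ _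
    simp only [map_sub, LinearMap.sub_apply, e1, e2, e3]
    linear_combination hpolar x y
  have := hnd _ hkey
  exact sub_eq_zero.1 this
end

section
/- Generalized Key Lemma: Let (V,Ω) be a 2n-dimensional complex symplectic vector space, U ⊂ V open nonempty, and 0 ≤ r ≤ n. Suppose F₁,…,F_{n+r} are holomorphic functions on U, functionally independent on U, such that {F_i, F_j} = 0 for all 1 ≤ i ≤ n−r and 1 ≤ j ≤ n+r. If a Lie subalgebra 𝔤 ⊂ sp(V,Ω) preserves every F_j (i.e., {F_j, H_A} = 0 for all A ∈ 𝔤, 1 ≤ j ≤ n+r), then 𝔤 is Abelian. -/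
open Module

/-- Antisymmetry from the alternating property. -/
lemma omega_antisymm {V : Type*} [AddCommGroup V] [Module ℂ V]
    (Ω : V →ₗ[ℂ] V →ₗ[ℂ] ℂ) (halt : ∀ x : V, Ω x x = 0) (u v : V) :
    Ω u v = - Ω v u := by
  have h := halt (u + v)
  simp only [map_add, LinearMap.add_apply, halt u, halt v] at h
  linear_combination h

/-- Generalized Key Lemma: if `F₁,…,F_{n+r}` are holomorphic and functionally
independent on an open set `U`, with `{F_i, F_j} = 0` for `1 ≤ i ≤ n−r`,
`1 ≤ j ≤ n+r`, and a Lie subalgebra `𝔤 ⊂ sp(V,Ω)` preserves every `F_j`,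
then `𝔤` is Abelian. -/
theorem key_lemma_noncommutative
    {V : Type*} [NormedAddCommGroup V] [NormedSpace ℂ V] [FiniteDimensional ℂ V]
    (n r : ℕ) (hr : r ≤ n) (hdim : finrank ℂ V = 2 * n)
    (Ω : V →ₗ[ℂ] V →ₗ[ℂ] ℂ)
    (halt : ∀ x : V, Ω x x = 0)
    (hnd : ∀ x : V, (∀ y : V, Ω x y = 0) → x = 0)
    (U : Set V) (hUopen : IsOpen U) (hUne : U.Nonempty)
    (F : Fin (n + r) → V → ℂ) (hFd : ∀ i, DifferentiableOn ℂ (F i) U)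
    -- Hamiltonian vector fields of the `F_i` on `U`
    (Xf : Fin (n + r) → V → V)
    (hXf : ∀ i, ∀ x ∈ U, ∀ v : V, Ω (Xf i x) v = fderiv ℂ (F i) x v)
    -- functional independence on `U`
    (hind : ∀ x ∈ U,
      LinearIndependent ℂ fun i : Fin (n + r) => (fderiv ℂ (F i) x : V →ₗ[ℂ] ℂ))
    -- `{F_i, F_j} = 0` for `i ≤ n − r` and all `j`
    (hcomm : ∀ i j : Fin (n + r), (i : ℕ) < n - r → ∀ x ∈ U, Ω (Xf i x) (Xf j x) = 0)
    -- Lie subalgebra `𝔤 ⊂ sp(V,Ω)`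
    (𝔤 : Submodule ℂ (V →ₗ[ℂ] V))
    (hsp : ∀ A ∈ 𝔤, ∀ x y : V, Ω x (A y) = - Ω (A x) y)
    (hlie : ∀ A ∈ 𝔤, ∀ B ∈ 𝔤, A ∘ₗ B - B ∘ₗ A ∈ 𝔤)
    -- `𝔤` preserves each `F_j`
    (hpres : ∀ A ∈ 𝔤, ∀ j : Fin (n + r), ∀ x ∈ U, fderiv ℂ (F j) x (A x) = 0) :
    ∀ A ∈ 𝔤, ∀ B ∈ 𝔤, A ∘ₗ B = B ∘ₗ A := by
  intro A hA B hB
  -- Step 1: for `x ∈ U`, `Ω (A x) (B x) = 0`.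
  have key : ∀ x ∈ U, Ω (A x) (B x) = 0 := by
    intro x hx
    set φ : Fin (n + r) → (V →ₗ[ℂ] ℂ) := fun j => (fderiv ℂ (F j) x : V →ₗ[ℂ] ℂ) with hφdef
    have hφ : LinearIndependent ℂ φ := hind x hx
    have hXfφ : ∀ j, Ω (Xf j x) = φ j := by
      intro j; ext v; exact hXf j x hx v
    -- the intersection of the kernels, as the dual coannihilator
    set K : Submodule ℂ V := (Submodule.span ℂ (Set.range φ)).dualCoannihilator with hKdef
    have hmemK : ∀ v : V, v ∈ K ↔ ∀ j, φ j v = 0 := by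
      intro v
      rw [Submodule.mem_dualCoannihilator]
      constructor
      · intro h j; exact h (φ j) (Submodule.subset_span ⟨j, rfl⟩)
      · intro h f hf
        induction hf using Submodule.span_induction with
        | mem f hf => obtain ⟨j, rfl⟩ := hf; exact h j
        | zero => simp
        | add f g _ _ hf hg => simp [hf, hg]
        | smul c f _ hf => simp [hf]
    have h3 := Subspace.finrank_add_finrank_dualCoannihilator_eq
      (Submodule.span ℂ (Set.range φ))
    rw [finrank_span_eq_card hφ, Fintype.card_fin, hdim] at h3
    have hKrank : finrank ℂ K = n - r := by rw [hKdef]; omega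
    -- the first `n - r` Hamiltonian vector fields
    have hle : n - r ≤ n + r := by omega
    set ι : Fin (n - r) → V := fun i => Xf (Fin.castLE hle i) x with hιdef
    have hιK : ∀ i, ι i ∈ K := by
      intro i
      rw [hmemK]
      intro j
      rw [← hXfφ j]
      rw [omega_antisymm Ω halt]
      rw [hcomm (Fin.castLE hle i) j (by simpa using i.2) x hx]
      simp
    have hιind : LinearIndependent ℂ ι := by
      apply LinearIndependent.of_comp Ω
      have h2 : ⇑Ω ∘ ι = φ ∘ Fin.castLE hle := funext fun i => hXfφ _
      rw [h2]
      exact hφ.comp _ (Fin.castLE_injective hle)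
    set S : Submodule ℂ V := Submodule.span ℂ (Set.range ι) with hSdef
    have hSK : S ≤ K := Submodule.span_le.2 (by rintro _ ⟨i, rfl⟩; exact hιK i)
    have hSrank : finrank ℂ S = n - r := by
      rw [hSdef, finrank_span_eq_card hιind, Fintype.card_fin]
    have hSeqK : S = K := by
      apply Submodule.eq_of_le_of_finrank_le hSK
      rw [hSrank, hKrank]
    -- `A x` and `B x` lie in `K`
    have hAx : A x ∈ K := (hmemK _).2 fun j => hpres A hA j x hx
    have hBx : B x ∈ K := (hmemK _).2 fun j => hpres B hB j x hx
    -- the functional `v ↦ Ω v (B x)` vanishes on `S = K`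
    have hker : A x ∈ LinearMap.ker (Ω.flip (B x)) := by
      rw [← hSeqK] at hAx
      refine Submodule.span_le.2 ?_ hAx
      rintro _ ⟨i, rfl⟩
      simp only [SetLike.mem_coe, LinearMap.mem_ker, LinearMap.flip_apply]
      show Ω (Xf (Fin.castLE hle i) x) (B x) = 0
      rw [hXfφ]
      exact (hmemK _).1 hBx _
    simpa using hker
  -- Step 2: extend `Ω (A v) (B v) = 0` to all of `V` (quadratic polynomial identity).
  have keyV : ∀ v : V, Ω (A v) (B v) = 0 := by
    obtain ⟨x₀, hx₀⟩ := hUne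
    obtain ⟨δ, hδ, hball⟩ := Metric.isOpen_iff.1 hUopen x₀ hx₀
    intro v
    set s : ℝ := δ / (2 * (‖v‖ + 1)) with hsdef
    have hspos : 0 < s := by positivity
    have hnorm : ∀ t : ℂ, ‖t‖ ≤ s → x₀ + t • v ∈ U := by
      intro t ht
      apply hball
      have h1 : ‖t‖ * ‖v‖ < δ := by
        have hs : s * (2 * (‖v‖ + 1)) = δ := by
          rw [hsdef]; field_simp
        nlinarith [norm_nonneg v, norm_nonneg t]
      simpa [Metric.mem_ball, dist_eq_norm, norm_smul] using h1
    have hpoly : ∀ t : ℂ, ‖t‖ ≤ s →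
        Ω (A x₀) (B x₀) + t * (Ω (A x₀) (B v) + Ω (A v) (B x₀))
          + t ^ 2 * Ω (A v) (B v) = 0 := by
      intro t ht
      have h := key _ (hnorm t ht)
      simp only [map_add, map_smul, LinearMap.add_apply, LinearMap.smul_apply,
        smul_eq_mul] at h
      linear_combination h
    have hns : ‖(s : ℂ)‖ = s := by
      rw [Complex.norm_real, Real.norm_of_nonneg hspos.le]
    have e1 := hpoly s (le_of_eq hns)
    have e2 := hpoly (-(s : ℂ)) (by rw [norm_neg, hns])
    have e3 := hpoly ((s : ℂ) / 2) (by
      rw [norm_div, hns]; simp; linarith)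
    have e4 := hpoly (-((s : ℂ) / 2)) (by
      rw [norm_neg, norm_div, hns]; simp; linarith)
    have hσ : (s : ℂ) ≠ 0 := Complex.ofReal_ne_zero.2 hspos.ne'
    have hc : (3 / 2 : ℂ) * (s : ℂ) ^ 2 * Ω (A v) (B v) = 0 := by
      linear_combination e1 + e2 - e3 - e4
    have h2 : (3 / 2 : ℂ) * (s : ℂ) ^ 2 ≠ 0 := by
      simp [hσ]
    exact (mul_eq_zero.1 hc).resolve_left h2
  -- Step 3: polarize and conclude using the `sp` condition and nondegeneracy.
  have hbil : ∀ x y : V, Ω (A x) (B y) = - Ω (A y) (B x) := by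
    intro x y
    have h := keyV (x + y)
    simp only [map_add, LinearMap.add_apply] at h
    linear_combination h - keyV x - keyV y
  apply LinearMap.ext
  intro x
  have hz : ∀ y : V, Ω (A (B x) - B (A x)) y = 0 := by
    intro y
    have h1 := hsp A hA (B x) y
    have h2 := hsp B hB (A x) y
    have h3 := hbil x y
    have h4 := omega_antisymm Ω halt (A y) (B x)
    simp only [map_sub, LinearMap.sub_apply]
    linear_combination h1 - h2 + h3 - h4
  have := hnd _ hz
  simp only [LinearMap.comp_apply]
  exact sub_eq_zero.1 this
end

section
/- Under the hypotheses of the generalized Key Lemma (F₁,…,F_{n+r} functionally independent on U ⊂ V with {F_i,F_j}=0 for i ≤ n−r, j ≤ n+r), let A ∈ sp(V,Ω) preserve all F_j. Then at every point x of a common level set Σ_c, the vector Ax lies in the span of X₁(x),…,X_{n−r}(x), the Hamiltonian vector fields of F₁,…,F_{n−r}; i.e., there exist holomorphic functions λ₁,…,λ_{n−r} on Σ_c with Ax = Σ_i λ_i(x) X_i(x). -/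
open Module

/-- If `A ∈ sp(V,Ω)` preserves all the first integrals `F₁,…,F_{n+r}` of the
generalized Key Lemma, then at every point `x` of a common level set `Σ_c` the
vector `Ax` lies in the span of the Hamiltonian vector fields `X₁(x),…,X_{n−r}(x)`
of `F₁,…,F_{n−r}`; i.e. `Ax = Σ_i λ_i(x) X_i(x)` for suitable coefficients. -/
theorem sp_element_tangent_to_level_set
    {V : Type*} [NormedAddCommGroup V] [NormedSpace ℂ V] [FiniteDimensional ℂ V]
    (n r : ℕ) (hr : r ≤ n) (hdim : finrank ℂ V = 2 * n)
    (Ω : V →ₗ[ℂ] V →ₗ[ℂ] ℂ)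
    (halt : ∀ x : V, Ω x x = 0)
    (hnd : ∀ x : V, (∀ y : V, Ω x y = 0) → x = 0)
    (U : Set V) (hUopen : IsOpen U)
    (F : Fin (n + r) → V → ℂ) (hFd : ∀ i, DifferentiableOn ℂ (F i) U)
    (Xf : Fin (n + r) → V → V)
    (hXf : ∀ i, ∀ x ∈ U, ∀ v : V, Ω (Xf i x) v = fderiv ℂ (F i) x v)
    (c : Fin (n + r) → ℂ)
    (Sc : Set V) (hSc : Sc = {x ∈ U | ∀ i, F i x = c i})
    (hind : ∀ x ∈ Sc,
      LinearIndependent ℂ fun i : Fin (n + r) => (fderiv ℂ (F i) x : V →ₗ[ℂ] ℂ))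
    (hcomm : ∀ x ∈ Sc, ∀ i j : Fin (n + r), (i : ℕ) < n - r → Ω (Xf i x) (Xf j x) = 0)
    (A : V →ₗ[ℂ] V) (hA : ∀ x y : V, Ω x (A y) = - Ω (A x) y)
    (hpres : ∀ j : Fin (n + r), ∀ x ∈ U, fderiv ℂ (F j) x (A x) = 0) :
    ∀ x ∈ Sc,
      A x ∈ Submodule.span ℂ
        (Set.range fun i : Fin (n - r) => Xf (Fin.castLE (by omega) i) x) := by
  intro x hx
  have hxU : x ∈ U := by rw [hSc] at hx; exact hx.1
  -- skewness of Ω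
  have hskew : ∀ u w : V, Ω u w = - Ω w u := by
    intro u w
    have h := halt (u + w)
    simp only [map_add, LinearMap.add_apply, halt u, halt w] at h
    linear_combination h
  -- the map Φ : V → ℂ^{n+r} given by the differentials
  set Φ : V →ₗ[ℂ] (Fin (n + r) → ℂ) :=
    LinearMap.pi (fun j => (fderiv ℂ (F j) x : V →ₗ[ℂ] ℂ)) with hΦ
  have hindx := hind x hx
  -- Φ is surjective since the functionals are linearly independent
  have hsurj : Function.Surjective Φ := by
    rw [← LinearMap.range_eq_top]
    by_contra hne
    obtain ⟨φ, φ0, hker⟩ :=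
      (LinearMap.range Φ).exists_le_ker_of_lt_top (lt_top_iff_ne_top.mpr hne)
    have hcoef : ∀ j : Fin (n + r),
        φ (fun k => if j = k then (1 : ℂ) else 0) = 0 := by
      have hsum : ∑ j : Fin (n + r),
          (φ (fun k => if j = k then (1 : ℂ) else 0)) •
            (fderiv ℂ (F j) x : V →ₗ[ℂ] ℂ) = 0 := by
        apply LinearMap.ext
        intro v
        have hv : φ (Φ v) = 0 := hker ⟨v, rfl⟩
        rw [LinearMap.pi_apply_eq_sum_univ φ (Φ v)] at hv
        simpa [Φ, mul_comm] using hv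
      exact fun j => linearIndependent_iff'.mp hindx Finset.univ _ hsum j
        (Finset.mem_univ j)
    apply φ0
    apply LinearMap.ext
    intro y
    rw [LinearMap.pi_apply_eq_sum_univ φ y]
    simp [hcoef]
  -- hence the kernel of Φ has dimension n - r
  have hkerdim : finrank ℂ (LinearMap.ker Φ) = n - r := by
    have h1 := LinearMap.finrank_range_add_finrank_ker Φ
    rw [LinearMap.range_eq_top.mpr hsurj, finrank_top, hdim] at h1
    have h2 : finrank ℂ (Fin (n + r) → ℂ) = n + r := by
      simp [finrank_fintype_fun_eq_card]
    omega
  -- the family of Hamiltonian vector fields X₁(x),…,X_{n-r}(x)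
  set Y : Fin (n - r) → V := fun i => Xf (Fin.castLE (by omega) i) x with hY
  -- each Ω (Xf j x) equals the differential dF_j(x) as a linear functional
  have hΩX : ∀ j : Fin (n + r), Ω (Xf j x) = (fderiv ℂ (F j) x : V →ₗ[ℂ] ℂ) := by
    intro j; apply LinearMap.ext; intro v; exact hXf j x hxU v
  -- Y is linearly independent
  have hYind : LinearIndependent ℂ Y := by
    apply LinearIndependent.of_comp Ω
    have : (Ω ∘ Y) = fun i : Fin (n - r) =>
        (fderiv ℂ (F (Fin.castLE (by omega) i)) x : V →ₗ[ℂ] ℂ) := by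
      funext i; exact hΩX _
    rw [this]
    exact hindx.comp (Fin.castLE (by omega)) (Fin.castLE_injective _)
  -- the span of Y has dimension n - r
  have hspandim : finrank ℂ (Submodule.span ℂ (Set.range Y)) = n - r := by
    rw [finrank_span_eq_card hYind, Fintype.card_fin]
  -- the span of Y is contained in ker Φ
  have hle : Submodule.span ℂ (Set.range Y) ≤ LinearMap.ker Φ := by
    rw [Submodule.span_le]
    rintro _ ⟨i, rfl⟩
    rw [SetLike.mem_coe, LinearMap.mem_ker]
    funext j
    have h1 : Φ (Y i) j = fderiv ℂ (F j) x (Y i) := rfl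
    rw [h1]
    have h2 : Ω (Xf j x) (Y i) = fderiv ℂ (F j) x (Y i) := hXf j x hxU _
    rw [← h2, hY]
    rw [hskew]
    rw [hcomm x hx (Fin.castLE (by omega) i) j (by simp)]
    simp
  -- hence the span equals ker Φ
  have heq : Submodule.span ℂ (Set.range Y) = LinearMap.ker Φ :=
    Submodule.eq_of_le_of_finrank_le hle (by rw [hkerdim, hspandim])
  -- A x lies in ker Φ
  have hAmem : A x ∈ LinearMap.ker Φ := by
    rw [LinearMap.mem_ker]
    funext j
    exact hpres j x hxU
  rw [heq]
  exact hAmem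
end
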